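/- Let q ∈ (0,1). Then the supremum, over all probability distributions of a positive-integer-valued random variable V with finite mean and finite entropy, of H(V)/(E[V] + (1−q)/q) equals the supremum over p ∈ (0,1] of q·H_b(p)/(q + p(1−q)), where H(V) is the Shannon entropy of V and H_b is the binary entropy function. -/

import Mathlib

/-- The binary entropy function (natural logarithm), with `Hb 0 = Hb 1 = 0`
by the convention `Real.log 0 = 0`. -/
noncomputable def Hb (x : ℝ) : ℝ := -(x * Real.log x) - (1 - x) * Real.log (1 - x)

/-!
The entropy of a distribution on the positive integers with mean `μ` is at most that of the
geometric distribution `k ↦ p (1 - p)^(k - 1)` with the same mean `μ = 1/p`, namely `Hb p / p`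
(Gibbs' inequality against the geometric law, whose log-likelihood is affine in `k`). Hence every
value of `H(V)/(E[V] + (1 - q)/q)` is dominated by `(Hb p / p)/(1/p + (1 - q)/q)
= q Hb p/(q + p(1 - q))` for `p = 1/E[V]`, and the geometric laws realise all these values.
-/

open Real

lemma negMulLog_add_mul_log_le {x y : ℝ} (hx : 0 ≤ x) (hy : 0 ≤ y) (hxy : 0 < x → 0 < y) :
    negMulLog x + x * log y ≤ y - x := by
  rcases hx.eq_or_lt with rfl | hx
  · simpa using hy
  have hy := hxy hx
  calc negMulLog x + x * log y = x * log (y / x) := by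
        rw [log_div hy.ne' hx.ne', negMulLog]; ring
    _ ≤ x * (y / x - 1) := by gcongr; exact log_le_sub_one_of_pos (by positivity)
    _ = y - x := by field_simp

theorem tsum_negMulLog_le_of_hasSum_mul_log {ι : Type*} {f g : ι → ℝ} {c : ℝ}
    (hf0 : ∀ i, 0 ≤ f i) (hf : HasSum f 1) (hg0 : ∀ i, 0 ≤ g i) (hg : HasSum g 1)
    (hsupp : ∀ i, 0 < f i → 0 < g i) (hent : Summable fun i => negMulLog (f i))
    (hcross : HasSum (fun i => f i * log (g i)) c) :
    ∑' i, negMulLog (f i) ≤ -c := by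
  have h := hasSum_le (fun i => negMulLog_add_mul_log_le (hf0 i) (hg0 i) (hsupp i))
    (hent.hasSum.add hcross) (hg.sub hf)
  linarith

section PNat

variable {f : ℕ+ → ℝ} {μ : ℝ}

lemma hasSum_coe_sub_one_mul (hf : HasSum f 1) (hμ : HasSum (fun k : ℕ+ => (k : ℝ) * f k) μ) :
    HasSum (fun k : ℕ+ => ((k : ℝ) - 1) * f k) (μ - 1) := by
  simpa only [sub_mul, one_mul] using hμ.sub hf

lemma coe_sub_one_mul_nonneg (hf0 : ∀ k, 0 ≤ f k) (k : ℕ+) : 0 ≤ ((k : ℝ) - 1) * f k :=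
  mul_nonneg (sub_nonneg.2 (Nat.one_le_cast.2 k.pos)) (hf0 k)

lemma one_le_of_hasSum_coe_mul (hf0 : ∀ k, 0 ≤ f k) (hf : HasSum f 1)
    (hμ : HasSum (fun k : ℕ+ => (k : ℝ) * f k) μ) : 1 ≤ μ :=
  sub_nonneg.1 ((hasSum_coe_sub_one_mul hf hμ).nonneg (coe_sub_one_mul_nonneg hf0))

lemma eq_zero_of_hasSum_coe_mul_one (hf0 : ∀ k, 0 ≤ f k) (hf : HasSum f 1)
    (hμ : HasSum (fun k : ℕ+ => (k : ℝ) * f k) 1) {k : ℕ+} (hk : k ≠ 1) : f k = 0 := by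
  have hzero := (hasSum_zero_iff_of_nonneg (coe_sub_one_mul_nonneg hf0)).1
    (by simpa using hasSum_coe_sub_one_mul hf hμ)
  have hk : (1 : ℝ) < k := by exact_mod_cast lt_of_le_of_ne (one_le (a := k)) (Ne.symm hk)
  simpa using (mul_eq_zero.1 (congrFun hzero k)).resolve_left (by linarith)

end PNat

noncomputable def geomPNat (p : ℝ) (k : ℕ+) : ℝ := p * (1 - p) ^ ((k : ℕ) - 1)

section Geometric

variable {p : ℝ}

lemma geomPNat_nonneg (hp : 0 < p) (hp1 : p ≤ 1) (k : ℕ+) : 0 ≤ geomPNat p k :=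
  mul_nonneg hp.le (pow_nonneg (sub_nonneg.2 hp1) _)

lemma geomPNat_pos (hp : 0 < p) (hp1 : p < 1) (k : ℕ+) : 0 < geomPNat p k :=
  mul_pos hp (pow_pos (sub_pos.2 hp1) _)

lemma hasSum_geomPNat (hp : 0 < p) (hp1 : p ≤ 1) : HasSum (geomPNat p) 1 := by
  refine (hasSum_pnat_iff_hasSum_succ (f := fun n : ℕ => p * (1 - p) ^ (n - 1))).2 ?_
  have h := (hasSum_geometric_of_lt_one (sub_nonneg.2 hp1) (by linarith)).mul_left p
  rwa [sub_sub_cancel, mul_inv_cancel₀ hp.ne'] at h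

lemma hasSum_coe_mul_geomPNat (hp : 0 < p) (hp1 : p ≤ 1) :
    HasSum (fun k : ℕ+ => (k : ℝ) * geomPNat p k) p⁻¹ := by
  have hr : ‖1 - p‖ < 1 := by rw [norm_of_nonneg (by linarith)]; linarith
  refine (hasSum_pnat_iff_hasSum_succ
    (f := fun n : ℕ => (n : ℝ) * (p * (1 - p) ^ (n - 1)))).2 ?_
  have h := ((hasSum_coe_mul_geometric_of_norm_lt_one hr).add
    (hasSum_geometric_of_lt_one (sub_nonneg.2 hp1) (by linarith))).mul_left p
  rw [sub_sub_cancel, show p * ((1 - p) / p ^ 2 + p⁻¹) = p⁻¹ by field_simp; ring] at h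
  refine h.congr_fun fun n => ?_
  push_cast
  ring

lemma log_geomPNat (hp : 0 < p) (hp1 : p ≤ 1) (k : ℕ+) :
    log (geomPNat p k) = log p + ((k : ℝ) - 1) * log (1 - p) := by
  rcases hp1.lt_or_eq with hp1 | rfl
  · rw [geomPNat, log_mul hp.ne' (pow_pos (sub_pos.2 hp1) _).ne', log_pow,
      Nat.cast_pred k.pos]
  · -- both sides vanish because `log 0 = 0`
    simp [geomPNat]

lemma hasSum_mul_log_geomPNat (hp : 0 < p) (hp1 : p ≤ 1) {f : ℕ+ → ℝ} {μ : ℝ} (hf : HasSum f 1)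
    (hμ : HasSum (fun k : ℕ+ => (k : ℝ) * f k) μ) :
    HasSum (fun k : ℕ+ => f k * log (geomPNat p k)) (log p + (μ - 1) * log (1 - p)) := by
  have h := (hf.mul_left (log p)).add ((hasSum_coe_sub_one_mul hf hμ).mul_left (log (1 - p)))
  rw [mul_one, mul_comm (log (1 - p))] at h
  exact h.congr_fun fun k => by rw [log_geomPNat hp hp1]; ring

lemma Hb_div_self (hp : p ≠ 0) : Hb p / p = -(log p + (p⁻¹ - 1) * log (1 - p)) := by
  rw [Hb]; field_simp; ring

lemma hasSum_negMulLog_geomPNat (hp : 0 < p) (hp1 : p ≤ 1) :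
    HasSum (fun k => negMulLog (geomPNat p k)) (Hb p / p) := by
  rw [Hb_div_self hp.ne']
  simpa only [negMulLog_eq_neg] using
    (hasSum_mul_log_geomPNat hp hp1 (hasSum_geomPNat hp hp1) (hasSum_coe_mul_geomPNat hp hp1)).neg

end Geometric

/-- The right-hand side is the entropy of `geomPNat μ⁻¹`, the geometric law with mean `μ`. -/
theorem tsum_negMulLog_le_of_hasSum_coe_mul {f : ℕ+ → ℝ} {μ : ℝ} (hf0 : ∀ k, 0 ≤ f k)
    (hf : HasSum f 1) (hμ : HasSum (fun k : ℕ+ => (k : ℝ) * f k) μ)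
    (hent : Summable fun k => negMulLog (f k)) :
    ∑' k, negMulLog (f k) ≤ Hb μ⁻¹ / μ⁻¹ := by
  have hμ1 := one_le_of_hasSum_coe_mul hf0 hf hμ
  have hp : 0 < μ⁻¹ := by positivity
  have hp1 : μ⁻¹ ≤ 1 := inv_le_one_of_one_le₀ hμ1
  have hsupp : ∀ k, 0 < f k → 0 < geomPNat μ⁻¹ k := by
    rcases hμ1.eq_or_lt with rfl | hμ1
    · -- mean `1` forces `f` to be the point mass at `1`, where `geomPNat 1` is supported
      intro k hk
      obtain rfl : k = 1 := by_contra fun h =>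
        hk.ne' (eq_zero_of_hasSum_coe_mul_one hf0 hf hμ h)
      simp [geomPNat]
    · exact fun k _ => geomPNat_pos hp (inv_lt_one_of_one_lt₀ hμ1) k
  rw [Hb_div_self hp.ne', inv_inv]
  exact tsum_negMulLog_le_of_hasSum_mul_log hf0 hf (geomPNat_nonneg hp hp1)
    (hasSum_geomPNat hp hp1) hsupp hent (hasSum_mul_log_geomPNat hp hp1 hf hμ)

lemma Hb_div_self_div_eq {p q : ℝ} (hp : p ≠ 0) (hq : q ≠ 0) :
    (Hb p / p) / (p⁻¹ + (1 - q) / q) = q * Hb p / (q + p * (1 - q)) := by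
  rw [show p⁻¹ + (1 - q) / q = (q + p * (1 - q)) / (p * q) by field_simp]
  field_simp

/-- For `q ∈ (0,1)`, the supremum of `H(V)/(E[V] + (1−q)/q)` over
all distributions `f` of a positive-integer-valued random variable `V` with
finite mean and finite entropy equals `sup_{p ∈ (0,1]} q·Hb(p)/(q + p(1−q))`. -/
theorem stmt8 (q : ℝ) (hq : q ∈ Set.Ioo (0 : ℝ) 1) :
    sSup {r : ℝ | ∃ f : ℕ+ → ℝ, (∀ k, 0 ≤ f k) ∧ HasSum f 1 ∧
        Summable (fun k : ℕ+ => (k : ℝ) * f k) ∧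
        Summable (fun k : ℕ+ => Real.negMulLog (f k)) ∧
        r = (∑' k : ℕ+, Real.negMulLog (f k)) /
              ((∑' k : ℕ+, (k : ℝ) * f k) + (1 - q) / q)} =
      sSup {r : ℝ | ∃ p : ℝ, 0 < p ∧ p ≤ 1 ∧ r = q * Hb p / (q + p * (1 - q))} := by
  obtain ⟨hq0, hq1⟩ := hq
  apply csSup_eq_csSup_of_forall_exists_le
  · rintro r ⟨f, hf0, hf, hmean, hent, rfl⟩
    have hμ1 := one_le_of_hasSum_coe_mul hf0 hf hmean.hasSum
    refine ⟨_, ⟨_, inv_pos.2 (by linarith), inv_le_one_of_one_le₀ hμ1, rfl⟩, ?_⟩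
    rw [← Hb_div_self_div_eq (by positivity) hq0.ne', inv_inv]
    have : 0 ≤ (1 - q) / q := div_nonneg (by linarith) hq0.le
    gcongr
    exact tsum_negMulLog_le_of_hasSum_coe_mul hf0 hf hmean.hasSum hent
  · rintro r ⟨p, hp, hp1, rfl⟩
    refine ⟨_, ⟨geomPNat p, geomPNat_nonneg hp hp1, hasSum_geomPNat hp hp1,
      (hasSum_coe_mul_geomPNat hp hp1).summable, (hasSum_negMulLog_geomPNat hp hp1).summable,
      rfl⟩, le_of_eq ?_⟩
    rw [(hasSum_negMulLog_geomPNat hp hp1).tsum_eq, (hasSum_coe_mul_geomPNat hp hp1).tsum_eq,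
      Hb_div_self_div_eq hp.ne' hq0.ne']
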